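/- arXiv:1504.02333 — 3 statements merged into one kernel-verified Lean document; each statement's English description precedes it below -/
import Mathlib

section
/- For integers q ≥ 1 and M ≥ 1 with q ≤ M, we have Σ_{j=0}^{q} S(q,j) · M^{-j} · C(M,j) · j! ≥ (1 - q²/(2M)) · B_q, where B_q is the q-th Bell number. -/
open MeasureTheory Finset

/-- Stirling numbers of the second kind. -/
def stirling2 : ℕ → ℕ → ℕ
  | 0, 0 => 1
  | 0, _ + 1 => 0
  | _ + 1, 0 => 0
  | n + 1, k + 1 => (k + 1) * stirling2 n (k + 1) + stirling2 n k

/-- Bell numbers. -/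
def bell (q : ℕ) : ℕ := ∑ j ∈ Finset.range (q + 1), stirling2 q j

lemma weierstrass (j : ℕ) (f : ℕ → ℝ) (h0 : ∀ i < j, 0 ≤ f i) (h1 : ∀ i < j, f i ≤ 1) :
    1 - ∑ i ∈ Finset.range j, f i ≤ ∏ i ∈ Finset.range j, (1 - f i) := by
  induction j with
  | zero => simp
  | succ n ih =>
    rw [Finset.prod_range_succ, Finset.sum_range_succ]
    have hP : 1 - ∑ i ∈ Finset.range n, f i ≤ ∏ i ∈ Finset.range n, (1 - f i) :=
      ih (fun i hi => h0 i (hi.trans (Nat.lt_succ_self n)))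
        (fun i hi => h1 i (hi.trans (Nat.lt_succ_self n)))
    have hPnn : (0:ℝ) ≤ ∏ i ∈ Finset.range n, (1 - f i) :=
      Finset.prod_nonneg fun i hi => by
        have := h1 i ((Finset.mem_range.mp hi).trans (Nat.lt_succ_self n)); linarith
    have hP1 : ∏ i ∈ Finset.range n, (1 - f i) ≤ 1 :=
      Finset.prod_le_one (fun i hi => by
        have := h1 i ((Finset.mem_range.mp hi).trans (Nat.lt_succ_self n)); linarith)
        (fun i hi => by
        have := h0 i ((Finset.mem_range.mp hi).trans (Nat.lt_succ_self n)); linarith)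
    have hfn0 := h0 n (Nat.lt_succ_self n)
    nlinarith [mul_le_mul_of_nonneg_right hP1 hfn0]

lemma gauss_sum (j : ℕ) : (∑ i ∈ Finset.range j, (i : ℝ)) = (j : ℝ) * ((j : ℝ) - 1) / 2 := by
  induction j with
  | zero => simp
  | succ n ih => rw [Finset.sum_range_succ, ih]; push_cast; ring

theorem stmt_2 (q M : ℕ) (hq : 1 ≤ q) (hM : 1 ≤ M) (hqM : q ≤ M) :
    ∑ j ∈ Finset.range (q + 1),
        (stirling2 q j : ℝ) * ((M : ℝ)⁻¹) ^ j * (M.choose j) * (j.factorial)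
      ≥ (1 - (q : ℝ) ^ 2 / (2 * M)) * (bell q : ℝ) := by
  have hM0 : (0:ℝ) < M := by exact_mod_cast hM
  have hbell : (bell q : ℝ) = ∑ j ∈ Finset.range (q + 1), (stirling2 q j : ℝ) := by
    unfold bell; push_cast; ring
  rw [ge_iff_le, hbell, Finset.mul_sum]
  apply Finset.sum_le_sum
  intro j hj
  have hjq : j ≤ q := Nat.lt_succ_iff.mp (Finset.mem_range.mp hj)
  have hjM : j ≤ M := hjq.trans hqM
  -- rewrite the term as stirling * product
  have hdesc : (M.choose j : ℝ) * (j.factorial : ℝ) = ∏ i ∈ Finset.range j, ((M : ℝ) - i) := by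
    rw [← Nat.cast_mul, mul_comm (M.choose j), ← Nat.descFactorial_eq_factorial_mul_choose,
      Nat.descFactorial_eq_prod_range]
    push_cast
    refine Finset.prod_congr rfl fun i hi => ?_
    have : i ≤ M := ((Finset.mem_range.mp hi).trans_le hjM).le
    push_cast [this]
    ring
  have key : ((M : ℝ)⁻¹) ^ j * ((M.choose j : ℝ) * (j.factorial : ℝ))
      = ∏ i ∈ Finset.range j, (1 - (i : ℝ) / M) := by
    rw [hdesc, show ((M : ℝ)⁻¹) ^ j = ∏ _i ∈ Finset.range j, (M : ℝ)⁻¹ by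
      rw [Finset.prod_const, Finset.card_range], ← Finset.prod_mul_distrib]
    refine Finset.prod_congr rfl fun i hi => ?_
    field_simp
  have hsum : ∑ i ∈ Finset.range j, (i : ℝ) / M ≤ (q : ℝ) ^ 2 / (2 * M) := by
    rw [← Finset.sum_div, gauss_sum j]
    rw [div_le_div_iff₀ hM0 (mul_pos two_pos hM0)]
    have hjq' : (j : ℝ) ≤ q := by exact_mod_cast hjq
    have hj0 : (0:ℝ) ≤ j := Nat.cast_nonneg j
    have h1 : (j:ℝ) * ((j:ℝ) - 1) ≤ (q:ℝ)^2 := by nlinarith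
    nlinarith [mul_le_mul_of_nonneg_right h1 hM0.le]
  have hprod : 1 - (q : ℝ) ^ 2 / (2 * M) ≤ ∏ i ∈ Finset.range j, (1 - (i : ℝ) / M) := by
    refine le_trans (by linarith) (weierstrass j (fun i => (i : ℝ) / M) ?_ ?_)
    · intro i _; positivity
    · intro i hi
      rw [div_le_one hM0]
      exact_mod_cast ((hi.trans_le hjM).le)
  calc (1 - (q : ℝ) ^ 2 / (2 * M)) * (stirling2 q j : ℝ)
      ≤ (∏ i ∈ Finset.range j, (1 - (i : ℝ) / M)) * (stirling2 q j : ℝ) :=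
        mul_le_mul_of_nonneg_right hprod (Nat.cast_nonneg _)
    _ = (stirling2 q j : ℝ) * ((M : ℝ)⁻¹) ^ j * (M.choose j) * (j.factorial) := by
        rw [← key]; ring
end

section
/- Anti-concentration of balls-in-bins loads: let S = ξ₁ + ... + ξ_M be a sum of q-wise independent Boolean random variables each with mean 1/M (case M = N), where q ≥ 4 is even and q² ≤ 2M. Then P[S ≥ (B_{q/2})^{2/q} / 2] ≥ (1 - q²/(2M)) · (B_{q/2})² / (2·B_q), where B_q denotes the q-th Bell number. -/
/-!
Expanding `S ^ k = (∑ i, ξ i) ^ k` over maps `f : Fin k → Fin M` writes `E[S ^ k]` as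
`∑ f, P[ξ i = 1 for all i ∈ range f]`, so for `k ≤ q` the `q`-wise independence makes it equal to
`∑ f, M ^ (-#range f) = ∑ j, S(k, j) · M(M-1)⋯(M-j+1) / M ^ j`, the `k`-th moment of
`Binomial(M, 1/M)`. Each term is at most `S(k, j)` and at least `S(k, j) (1 - k² / 2M)`, so
`B_k (1 - k² / 2M) ≤ E[S ^ k] ≤ B_k`. With `m = q / 2` and `t = B_m ^ (1/m) / 2` we have
`t ^ m ≤ B_m / 4`, and the Paley–Zygmund argument `(E[S ^ m] - t ^ m)² ≤ E[S ^ q] P[S ≥ t]`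
gives the bound.
-/

open MeasureTheory Finset

theorem stirling2_eq_stirlingSecond : stirling2 = Nat.stirlingSecond := by
  funext n k
  induction n generalizing k with
  | zero => cases k <;> rfl
  | succ n ih =>
    cases k with
    | zero => rfl
    | succ k => rw [stirling2, Nat.stirlingSecond_succ_succ, ih, ih]

theorem bell_eq_sum_stirlingSecond (k : ℕ) :
    bell k = ∑ j ∈ range (k + 1), Nat.stirlingSecond k j := by
  rw [bell, stirling2_eq_stirlingSecond]

theorem sum_comp_card_insert {α M : Type*} [Fintype α] [DecidableEq α] [AddCommMonoid M]
    (c : ℕ → M) (s : Finset α) :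
    ∑ a, c #(insert a s) = #s • c #s + (Fintype.card α - #s) • c (#s + 1) := by
  rw [← sum_add_sum_compl s, ← card_compl]
  congr 1
  · rw [← sum_const]
    exact sum_congr rfl fun a ha => by rw [insert_eq_of_mem ha]
  · rw [← sum_const]
    exact sum_congr rfl fun a ha => by rw [card_insert_of_notMem (mem_compl.1 ha)]

theorem image_univ_fin_cons {α : Type*} [DecidableEq α] {k : ℕ} (a : α) (g : Fin k → α) :
    univ.image (Fin.cons a g : Fin (k + 1) → α) = insert a (univ.image g) := by
  ext b
  simp [Fin.exists_fin_succ, eq_comm]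

open Nat in
theorem sum_comp_card_image {α M : Type*} [Fintype α] [DecidableEq α] [AddCommMonoid M]
    (k : ℕ) (c : ℕ → M) :
    ∑ f : Fin k → α, c #(univ.image f) =
      ∑ j ∈ range (k + 1), (stirlingSecond k j * (Fintype.card α).descFactorial j) • c j := by
  induction k generalizing c with
  | zero => simp
  | succ k ih =>
    let n := Fintype.card α
    have hshift : ∑ j ∈ range (k + 1), (stirlingSecond k j * n.descFactorial j * j) • c j =
        ∑ j ∈ range (k + 1),
          ((j + 1) * stirlingSecond k (j + 1) * n.descFactorial (j + 1)) • c (j + 1) := by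
      rw [sum_range_succ', sum_range_succ _ k, stirlingSecond_eq_zero_of_lt k.lt_succ_self]
      simp only [zero_smul, add_zero, zero_mul, mul_comm, mul_left_comm]
    have hsucc : ∀ j, (stirlingSecond (k + 1) (j + 1) * n.descFactorial (j + 1)) • c (j + 1) =
        ((j + 1) * stirlingSecond k (j + 1) * n.descFactorial (j + 1)) • c (j + 1) +
          (stirlingSecond k j * n.descFactorial j * (n - j)) • c (j + 1) := by
      intro j
      rw [← add_smul, stirlingSecond_succ_succ, descFactorial_succ]
      ring_nf
    calc ∑ f : Fin (k + 1) → α, c #(univ.image f)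
        = ∑ g : Fin k → α, ∑ a, c #(insert a (univ.image g)) := by
          rw [← (Fin.consEquiv fun _ => α).sum_comp, Fintype.sum_prod_type, sum_comm]
          simp [Fin.consEquiv, image_univ_fin_cons]
      _ = ∑ g : Fin k → α, (#(univ.image g) • c #(univ.image g) +
            (n - #(univ.image g)) • c (#(univ.image g) + 1)) := by
          simp only [sum_comp_card_insert, n]
      _ = ∑ j ∈ range (k + 1),
            (stirlingSecond k j * n.descFactorial j) • (j • c j + (n - j) • c (j + 1)) :=
          ih fun i => i • c i + (n - i) • c (i + 1)
      _ = ∑ j ∈ range (k + 2), (stirlingSecond (k + 1) j * n.descFactorial j) • c j := by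
          rw [sum_range_succ' _ (k + 1), stirlingSecond_succ_zero, zero_mul, zero_smul, add_zero]
          simp only [smul_add, smul_smul, sum_add_distrib, hshift, hsucc]

theorem one_sub_sq_div_le_descFactorial_div_pow {n j : ℕ} (hj : j ≤ n) :
    1 - (j : ℝ) ^ 2 / (2 * n) ≤ n.descFactorial j / (n : ℝ) ^ j := by
  induction j with
  | zero => simp
  | succ j ih =>
    have hn : (0 : ℝ) < n := by exact_mod_cast (j.succ_pos.trans_le hj)
    have hjn : (j : ℝ) ≤ n := by exact_mod_cast (j.le_succ.trans hj)
    have hratio : (n.descFactorial (j + 1) : ℝ) / (n : ℝ) ^ (j + 1) =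
        n.descFactorial j / (n : ℝ) ^ j * (1 - j / n) := by
      rw [Nat.descFactorial_succ, Nat.cast_mul, Nat.cast_sub (j.le_succ.trans hj), pow_succ]
      field_simp
    have hfactor : 0 ≤ 1 - (j : ℝ) / n := by rw [sub_nonneg, div_le_one hn]; exact hjn
    rw [hratio]
    calc 1 - ((j + 1 : ℕ) : ℝ) ^ 2 / (2 * n)
        ≤ 1 - (j : ℝ) ^ 2 / (2 * n) - j / n := by
          have hexpand : ((j + 1 : ℕ) : ℝ) ^ 2 / (2 * n) =
              (j : ℝ) ^ 2 / (2 * n) + j / n + 1 / (2 * n) := by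
            push_cast; field_simp; ring
          linarith [show (0 : ℝ) ≤ 1 / (2 * n) by positivity]
      _ ≤ (1 - (j : ℝ) ^ 2 / (2 * n)) * (1 - j / n) := by
          nlinarith [show (0 : ℝ) ≤ (j : ℝ) ^ 2 / (2 * n) * (j / n) by positivity]
      _ ≤ _ := mul_le_mul_of_nonneg_right (ih (j.le_succ.trans hj)) hfactor

open Nat in
def binomialMoment (n : ℕ) (p : ℝ) (k : ℕ) : ℝ :=
  ∑ j ∈ range (k + 1), (stirlingSecond k j * n.descFactorial j : ℝ) * p ^ j

theorem binomialMoment_inv_le_bell (n k : ℕ) : binomialMoment n (n : ℝ)⁻¹ k ≤ bell k := by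
  rw [binomialMoment, bell_eq_sum_stirlingSecond, Nat.cast_sum]
  refine sum_le_sum fun j _ => ?_
  rw [inv_pow, mul_assoc, ← div_eq_mul_inv]
  refine mul_le_of_le_one_right (Nat.cast_nonneg _) (div_le_one_of_le₀ ?_ (by positivity))
  exact_mod_cast Nat.descFactorial_le_pow n j

theorem bell_mul_one_sub_le_binomialMoment {n k : ℕ} (hk : k ≤ n) :
    bell k * (1 - (k : ℝ) ^ 2 / (2 * n)) ≤ binomialMoment n (n : ℝ)⁻¹ k := by
  rw [binomialMoment, bell_eq_sum_stirlingSecond, Nat.cast_sum, sum_mul]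
  refine sum_le_sum fun j hj => ?_
  have hjk : j ≤ k := Nat.lt_succ_iff.1 (mem_range.1 hj)
  rw [inv_pow, mul_assoc, ← div_eq_mul_inv]
  refine mul_le_mul_of_nonneg_left ?_ (Nat.cast_nonneg _)
  calc 1 - (k : ℝ) ^ 2 / (2 * n) ≤ 1 - (j : ℝ) ^ 2 / (2 * n) := by gcongr
    _ ≤ _ := one_sub_sq_div_le_descFactorial_div_pow (hjk.trans hk)

section Probability

variable {Ω : Type*} [MeasurableSpace Ω] {μ : Measure Ω}

theorem integral_sum_indicator_pow [IsFiniteMeasure μ] {ι : Type*} [Fintype ι] {A : ι → Set Ω}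
    (hA : ∀ i, MeasurableSet (A i)) (k : ℕ) :
    ∫ ω, (∑ i, (A i).indicator (1 : Ω → ℝ) ω) ^ k ∂μ =
      ∑ f : Fin k → ι, μ.real (⋂ j, A (f j)) := by
  have hprod : ∀ f : Fin k → ι,
      (fun ω => ∏ j, (A (f j)).indicator (1 : Ω → ℝ) ω) = (⋂ j, A (f j)).indicator 1 := by
    intro f
    ext ω
    simp [prod_indicator_const_apply]
  simp_rw [sum_pow', Fintype.piFinset_univ]
  rw [integral_finsetSum _ fun f _ => ?_]
  · exact sum_congr rfl fun f _ => by
      rw [hprod f, integral_indicator_one (MeasurableSet.iInter fun j => hA (f j))]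
  · rw [hprod f]
    exact (integrable_const 1).indicator (MeasurableSet.iInter fun j => hA (f j))

theorem integral_sum_indicator_pow_eq_binomialMoment [IsFiniteMeasure μ] {ι : Type*} [Fintype ι]
    [DecidableEq ι] {A : ι → Set Ω} (hA : ∀ i, MeasurableSet (A i)) {p : ℝ} {k : ℕ}
    (hindep : ∀ s : Finset ι, #s ≤ k → μ.real (⋂ i ∈ s, A i) = p ^ #s) :
    ∫ ω, (∑ i, (A i).indicator (1 : Ω → ℝ) ω) ^ k ∂μ = binomialMoment (Fintype.card ι) p k := by
  have hinter : ∀ f : Fin k → ι, μ.real (⋂ j, A (f j)) = p ^ #(univ.image f) := fun f => by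
    rw [← hindep _ (card_image_le.trans (card_fin k).le)]
    simp
  simp_rw [integral_sum_indicator_pow hA, hinter, sum_comp_card_image, binomialMoment,
    nsmul_eq_mul, Nat.cast_mul]

theorem sq_integral_le_integral_sq_mul_measureReal_univ [IsFiniteMeasure μ] {f : Ω → ℝ}
    (hf0 : 0 ≤ᵐ[μ] f) (hf : MemLp f 2 μ) :
    (∫ ω, f ω ∂μ) ^ 2 ≤ (∫ ω, f ω ^ 2 ∂μ) * μ.real Set.univ := by
  have holder := integral_mul_le_Lp_mul_Lq_of_nonneg Real.HolderConjugate.two_two hf0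
    (ae_of_all _ fun _ => zero_le_one) (by simpa using hf) (memLp_const (1 : ℝ))
  simp only [mul_one, Real.rpow_two, one_pow, integral_const, smul_eq_mul,
    ← Real.sqrt_eq_rpow] at holder
  calc (∫ ω, f ω ∂μ) ^ 2
      ≤ (√(∫ ω, f ω ^ 2 ∂μ) * √(μ.real Set.univ)) ^ 2 :=
        pow_le_pow_left₀ (integral_nonneg_of_ae hf0) holder 2
    _ = (∫ ω, f ω ^ 2 ∂μ) * μ.real Set.univ := by
        rw [mul_pow, Real.sq_sqrt (integral_nonneg fun _ => sq_nonneg _),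
          Real.sq_sqrt measureReal_nonneg]

/-- The Paley–Zygmund inequality, with an arbitrary threshold. -/
theorem sq_integral_sub_le_integral_sq_mul_measureReal [IsProbabilityMeasure μ] {Y : Ω → ℝ}
    (hY0 : 0 ≤ Y) (hYm : Measurable Y) (hY : MemLp Y 2 μ) {s : ℝ} (hs0 : 0 ≤ s)
    (hs : s ≤ ∫ ω, Y ω ∂μ) :
    (∫ ω, Y ω ∂μ - s) ^ 2 ≤ (∫ ω, Y ω ^ 2 ∂μ) * μ.real {ω | s ≤ Y ω} := by
  set A := {ω | s ≤ Y ω}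
  have hA : MeasurableSet A := measurableSet_le measurable_const hYm
  have hbelow : ∫ ω in Aᶜ, Y ω ∂μ ≤ s :=
    calc ∫ ω in Aᶜ, Y ω ∂μ ≤ ∫ _ in Aᶜ, s ∂μ :=
          setIntegral_mono_on (hY.integrable one_le_two).integrableOn integrableOn_const hA.compl
            fun _ hω => le_of_lt (not_le.1 hω)
      _ = μ.real Aᶜ * s := by rw [setIntegral_const, smul_eq_mul]
      _ ≤ s := mul_le_of_le_one_left hs0 measureReal_le_one
  have hsplit := integral_add_compl hA (hY.integrable one_le_two)
  calc (∫ ω, Y ω ∂μ - s) ^ 2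
      ≤ (∫ ω in A, Y ω ∂μ) ^ 2 := pow_le_pow_left₀ (by linarith) (by linarith) 2
    _ ≤ (∫ ω in A, Y ω ^ 2 ∂μ) * μ.real A := by
        simpa using sq_integral_le_integral_sq_mul_measureReal_univ
          (ae_of_all _ hY0) (hY.restrict A)
    _ ≤ (∫ ω, Y ω ^ 2 ∂μ) * μ.real A :=
        mul_le_mul_of_nonneg_right (setIntegral_le_integral hY.integrable_sq
          (ae_of_all _ fun _ => sq_nonneg _)) measureReal_nonneg

theorem sq_sub_div_le_measureReal_of_moment_bounds [IsProbabilityMeasure μ] {S : Ω → ℝ}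
    (hS0 : 0 ≤ S) (hSm : Measurable S) {m : ℕ} (hm : 2 ≤ m) (hS : MemLp (S ^ m) 2 μ)
    {a L b : ℝ} (ha : 0 ≤ a) (haL : a / 4 ≤ L) (hL : L ≤ ∫ ω, S ω ^ m ∂μ)
    (hb : ∫ ω, S ω ^ (2 * m) ∂μ ≤ b) :
    (L - a / 4) ^ 2 / b ≤ μ.real {ω | a ^ (m : ℝ)⁻¹ / 2 ≤ S ω} := by
  set t := a ^ (m : ℝ)⁻¹ / 2
  have ht0 : 0 ≤ t := by positivity
  have htm : t ^ m ≤ a / 4 := by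
    rw [div_pow, ← Real.rpow_natCast, ← Real.rpow_mul ha,
      inv_mul_cancel₀ (by positivity), Real.rpow_one]
    gcongr
    calc (4 : ℝ) = 2 ^ 2 := by norm_num
      _ ≤ 2 ^ m := pow_le_pow_right₀ one_le_two hm
  have hevent : {ω | t ≤ S ω} = {ω | t ^ m ≤ S ω ^ m} := by
    ext ω
    exact (pow_le_pow_iff_left₀ ht0 (hS0 ω) (by omega)).symm
  have hPZ := sq_integral_sub_le_integral_sq_mul_measureReal (fun ω => pow_nonneg (hS0 ω) m)
    (hSm.pow_const m) hS (pow_nonneg ht0 m) (by linarith)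
  simp only [← pow_mul, mul_comm m 2] at hPZ
  rw [← hevent] at hPZ
  have hmoment0 : 0 ≤ ∫ ω, S ω ^ (2 * m) ∂μ := integral_nonneg fun ω => pow_nonneg (hS0 ω) _
  refine div_le_of_le_mul₀ (hmoment0.trans hb) measureReal_nonneg ?_
  calc (L - a / 4) ^ 2 ≤ (∫ ω, S ω ^ m ∂μ - t ^ m) ^ 2 := by gcongr
    _ ≤ (∫ ω, S ω ^ (2 * m) ∂μ) * μ.real {ω | t ≤ S ω} := hPZ
    _ ≤ μ.real {ω | t ≤ S ω} * b := by rw [mul_comm]; gcongr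

theorem memLp_sum_indicator_pow [IsFiniteMeasure μ] {ι : Type*} [Fintype ι] {A : ι → Set Ω}
    (hA : ∀ i, MeasurableSet (A i)) (m : ℕ) (p : ENNReal) :
    MemLp (fun ω => (∑ i, (A i).indicator (1 : Ω → ℝ) ω) ^ m) p μ := by
  refine MemLp.of_bound (by fun_prop (disch := exact hA _)) (Fintype.card ι ^ m)
    (ae_of_all _ fun ω => ?_)
  have hle : ∀ i, (A i).indicator (1 : Ω → ℝ) ω ≤ 1 := fun i =>
    Set.indicator_le_self' (fun _ _ => zero_le_one) ω
  have hS0 : 0 ≤ ∑ i, (A i).indicator (1 : Ω → ℝ) ω :=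
    sum_nonneg fun i _ => Set.indicator_nonneg (fun _ _ => zero_le_one) ω
  rw [Real.norm_of_nonneg (pow_nonneg hS0 m)]
  gcongr
  simpa using sum_le_sum fun i (_ : i ∈ univ) => hle i

theorem anticoncentration_sum_indicator_of_indep [IsProbabilityMeasure μ] {ι : Type*}
    [Fintype ι] [DecidableEq ι] {A : ι → Set Ω} (hA : ∀ i, MeasurableSet (A i)) {m : ℕ}
    (hm : 2 ≤ m) (hmn : (2 * m) ^ 2 ≤ 2 * Fintype.card ι)
    (hindep : ∀ s : Finset ι, #s ≤ 2 * m →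
      μ.real (⋂ i ∈ s, A i) = (Fintype.card ι : ℝ)⁻¹ ^ #s) :
    (1 - ((2 * m : ℕ) : ℝ) ^ 2 / (2 * Fintype.card ι)) * bell m ^ 2 / (2 * bell (2 * m)) ≤
      μ.real {ω | (bell m : ℝ) ^ (m : ℝ)⁻¹ / 2 ≤ ∑ i, (A i).indicator (1 : Ω → ℝ) ω} := by
  set n := Fintype.card ι
  set S : Ω → ℝ := fun ω => ∑ i, (A i).indicator 1 ω
  have hS0 : 0 ≤ S := fun ω =>
    sum_nonneg fun i _ => Set.indicator_nonneg (fun _ _ => zero_le_one) ω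
  have hSm : Measurable S := by fun_prop (disch := exact hA _)
  have hmoment : ∀ k ≤ 2 * m, ∫ ω, S ω ^ k ∂μ = binomialMoment n (n : ℝ)⁻¹ k := fun k hk =>
    integral_sum_indicator_pow_eq_binomialMoment hA fun s hs => hindep s (hs.trans hk)
  have hn : (0 : ℝ) < n := by exact_mod_cast (show 0 < n by nlinarith)
  set δ : ℝ := (m : ℝ) ^ 2 / (2 * n)
  have hδ : δ ≤ 1 / 4 := by
    rw [div_le_iff₀ (by positivity)]
    have : ((2 * m : ℕ) : ℝ) ^ 2 ≤ 2 * n := by exact_mod_cast hmn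
    push_cast at this
    linarith
  have hB : (0 : ℝ) ≤ bell m := Nat.cast_nonneg _
  calc (1 - ((2 * m : ℕ) : ℝ) ^ 2 / (2 * n)) * bell m ^ 2 / (2 * bell (2 * m))
      = ((1 - 4 * δ) * bell m ^ 2 / 2) / bell (2 * m) := by push_cast; ring
    _ ≤ (bell m * (1 - δ) - bell m / 4) ^ 2 / bell (2 * m) := by
        gcongr
        nlinarith [show 0 ≤ δ by positivity]
    _ ≤ μ.real {ω | (bell m : ℝ) ^ (m : ℝ)⁻¹ / 2 ≤ S ω} :=
        sq_sub_div_le_measureReal_of_moment_bounds hS0 hSm hm (memLp_sum_indicator_pow hA m 2)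
          hB (by nlinarith)
          ((bell_mul_one_sub_le_binomialMoment (by nlinarith)).trans_eq (hmoment m (by omega)).symm)
          ((hmoment _ le_rfl).trans_le (binomialMoment_inv_le_bell _ _))

end Probability

theorem stmt_6_general {Ω : Type*} [MeasurableSpace Ω] (μ : Measure Ω) [IsProbabilityMeasure μ]
    (M q : ℕ) (hq : 4 ≤ q) (hqeven : Even q) (hq2M : q ^ 2 ≤ 2 * M)
    (ξ : Fin M → Ω → ℝ)
    (hmeas : ∀ i, Measurable (ξ i))
    (hbool : ∀ i ω, ξ i ω = 0 ∨ ξ i ω = 1)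
    (hmean : ∀ i, μ {ω | ξ i ω = 1} = ENNReal.ofReal (1 / M))
    (hind : ∀ t : Finset (Fin M), t.card ≤ q →
      μ (⋂ i ∈ t, {ω | ξ i ω = 1}) = ∏ i ∈ t, μ {ω | ξ i ω = 1}) :
    (μ {ω | (bell (q / 2) : ℝ) ^ (2 / (q : ℝ)) / 2 ≤ ∑ i, ξ i ω}).toReal ≥
      (1 - (q : ℝ) ^ 2 / (2 * M)) * (bell (q / 2) : ℝ) ^ 2 / (2 * (bell q : ℝ)) := by
  obtain ⟨m, rfl⟩ := hqeven.two_dvd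
  have hm : 2 ≤ m := by omega
  set A : Fin M → Set Ω := fun i => {ω | ξ i ω = 1}
  have hξ : ∀ i, ξ i = (A i).indicator 1 := fun i => funext fun ω => by
    rcases hbool i ω with h | h <;> simp [A, h]
  have hindep : ∀ s : Finset (Fin M), #s ≤ 2 * m → μ.real (⋂ i ∈ s, A i) = (M : ℝ)⁻¹ ^ #s := by
    intro s hs
    rw [measureReal_def, hind s hs, prod_congr rfl fun i _ => hmean i, prod_const,
      ENNReal.toReal_pow, ENNReal.toReal_ofReal (by positivity), one_div]
  have hexp : (2 : ℝ) / ((2 * m : ℕ) : ℝ) = (m : ℝ)⁻¹ := by push_cast; field_simp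
  rw [Nat.mul_div_cancel_left m two_pos, ge_iff_le, ← measureReal_def, hexp]
  simpa only [Fintype.card_fin, ← hξ] using anticoncentration_sum_indicator_of_indep (A := A)
    (fun i => hmeas i (measurableSet_singleton 1)) hm (by simpa using hq2M) (by simpa using hindep)

theorem stmt_6 {Ω : Type*} [MeasurableSpace Ω] (μ : Measure Ω) [IsProbabilityMeasure μ]
    (M q : ℕ) (hM : 1 ≤ M) (hq : 4 ≤ q) (hqeven : Even q) (hq2M : q ^ 2 ≤ 2 * M)
    (ξ : Fin M → Ω → ℝ)
    (hmeas : ∀ i, Measurable (ξ i))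
    (hbool : ∀ i ω, ξ i ω = 0 ∨ ξ i ω = 1)
    (hmean : ∀ i, μ {ω | ξ i ω = 1} = ENNReal.ofReal (1 / M))
    (hind : ∀ t : Finset (Fin M), t.card ≤ q →
      μ (⋂ i ∈ t, {ω | ξ i ω = 1}) = ∏ i ∈ t, μ {ω | ξ i ω = 1}) :
    (μ {ω | (bell (q / 2) : ℝ) ^ (2 / (q : ℝ)) / 2 ≤ ∑ i, ξ i ω}).toReal ≥
      (1 - (q : ℝ) ^ 2 / (2 * M)) * (bell (q / 2) : ℝ) ^ 2 / (2 * (bell q : ℝ)) :=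
  stmt_6_general μ M q hq hqeven hq2M ξ hmeas hbool hmean hind
end

section
/- The Bell numbers satisfy the upper bound B_q ≤ (q / ln(q+1))^q for all q ≥ 1. -/
/-!
Since `k! S(q, k)` counts the surjections onto a `k`-set, `S(q, k) ≤ k^q / k!` and hence
`B_q ≤ ∑ k^q / k!`. As `y^q ≤ (q/e)^q e^y`, for every `t > 0` this is at most
`(q / (e t))^q · exp (e^t)`. Choosing `t = ¾ log (q + 1)` makes `e^t = (q + 1)^{3/4} ≤ 2q/3`,
and `exp (2q/3) ≤ (3e/4)^q` because `log (3/4) ≥ -1/3`; this yields the claim for `q ≥ 8`.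
The cases `q < 8` are checked numerically against `log x ≤ k y / e` for `x ≤ y^k`.
-/

open MeasureTheory Finset

open Real
open scoped Nat

theorem factorial_mul_stirling2_succ_succ (n j : ℕ) :
    (j + 1)! * stirling2 (n + 1) (j + 1) =
      (j + 1) * ((j + 1)! * stirling2 n (j + 1) + j ! * stirling2 n j) := by
  rw [stirling2, Nat.factorial_succ]
  ring

theorem sum_choose_mul_factorial_mul_stirling2 (n k : ℕ) :
    ∑ j ∈ range (k + 1), k.choose j * (j ! * stirling2 n j) = k ^ n := by
  induction n with
  | zero => simp [sum_range_succ', stirling2]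
  | succ n ih =>
    set a : ℕ → ℕ := fun j ↦ j ! * stirling2 n j
    have hshift : ∑ i ∈ range k, k.choose (i + 1) * (i + 1) * a (i + 1)
        = ∑ j ∈ range (k + 1), k.choose j * j * a j := by
      simp [sum_range_succ' _ k]
    have hdown : ∑ i ∈ range k, k.choose (i + 1) * (i + 1) * a i
        = ∑ j ∈ range (k + 1), k.choose j * (k - j) * a j := by
      simp [sum_range_succ _ k, Nat.choose_succ_right_eq]
    calc ∑ j ∈ range (k + 1), k.choose j * (j ! * stirling2 (n + 1) j)
        = ∑ i ∈ range k, (k.choose (i + 1) * (i + 1) * a (i + 1)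
            + k.choose (i + 1) * (i + 1) * a i) := by
          rw [sum_range_succ', show stirling2 (n + 1) 0 = 0 from rfl, mul_zero, mul_zero, add_zero]
          refine sum_congr rfl fun i _ ↦ ?_
          rw [factorial_mul_stirling2_succ_succ]
          ring
      _ = ∑ j ∈ range (k + 1), k * (k.choose j * a j) := by
          rw [sum_add_distrib, hshift, hdown, ← sum_add_distrib]
          refine sum_congr rfl fun j hj ↦ ?_
          have hjk : j + (k - j) = k := Nat.add_sub_cancel' (mem_range_succ_iff.mp hj)
          rw [← add_mul, ← mul_add, hjk]
          ring
      _ = k ^ (n + 1) := by rw [← mul_sum, ih, pow_succ, mul_comm]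

theorem factorial_mul_stirling2_le_pow (n k : ℕ) : k ! * stirling2 n k ≤ k ^ n :=
  calc k ! * stirling2 n k = k.choose k * (k ! * stirling2 n k) := by
        rw [Nat.choose_self, one_mul]
    _ ≤ ∑ j ∈ range (k + 1), k.choose j * (j ! * stirling2 n j) :=
        single_le_sum (f := fun j ↦ k.choose j * (j ! * stirling2 n j))
          (fun _ _ ↦ Nat.zero_le _) (self_mem_range_succ k)
    _ = k ^ n := sum_choose_mul_factorial_mul_stirling2 n k

theorem bell_le_sum_pow_div_factorial (q : ℕ) :
    (bell q : ℝ) ≤ ∑ k ∈ range (q + 1), (k : ℝ) ^ q / k ! := by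
  rw [bell, Nat.cast_sum]
  gcongr with k
  rw [le_div_iff₀ (by positivity), mul_comm]
  exact_mod_cast factorial_mul_stirling2_le_pow q k

theorem pow_le_div_exp_one_pow_mul_exp (n : ℕ) {y : ℝ} (hy : 0 ≤ y) :
    y ^ n ≤ (n / exp 1) ^ n * exp y := by
  rcases n.eq_zero_or_pos with rfl | hn
  · simpa using one_le_exp hy
  have hn' : (0 : ℝ) < n := by exact_mod_cast hn
  have hbase : y ≤ n / exp 1 * exp (y / n) := by
    have h := add_one_le_exp (y / n - 1)
    rw [sub_add_cancel, exp_sub, div_le_div_iff₀ hn' (exp_pos 1)] at h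
    rw [div_mul_eq_mul_div, le_div_iff₀ (exp_pos 1)]
    linarith
  calc y ^ n ≤ (n / exp 1 * exp (y / n)) ^ n := pow_le_pow_left₀ hy hbase n
    _ = (n / exp 1) ^ n * exp y := by rw [mul_pow, ← exp_nat_mul, mul_div_cancel₀ _ hn'.ne']

theorem bell_le_mul_exp_exp (q : ℕ) {t : ℝ} (ht : 0 < t) :
    (bell q : ℝ) ≤ (q / (exp 1 * t)) ^ q * exp (exp t) := by
  have hterm (k : ℕ) : (k : ℝ) ^ q ≤ (q / (exp 1 * t)) ^ q * exp t ^ k := by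
    have h := pow_le_div_exp_one_pow_mul_exp q (mul_nonneg ht.le (Nat.cast_nonneg k))
    rw [mul_comm t, mul_pow, exp_nat_mul] at h
    rw [div_mul_eq_div_div, div_pow _ t, div_mul_eq_mul_div, le_div_iff₀ (by positivity)]
    exact h
  calc (bell q : ℝ) ≤ ∑ k ∈ range (q + 1), (k : ℝ) ^ q / k ! :=
        bell_le_sum_pow_div_factorial q
    _ ≤ ∑ k ∈ range (q + 1), (q / (exp 1 * t)) ^ q * (exp t ^ k / k !) := by
        gcongr with k
        rw [← mul_div_assoc]
        gcongr
        exact hterm k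
    _ ≤ (q / (exp 1 * t)) ^ q * exp (exp t) := by
        rw [← mul_sum]
        gcongr
        exact sum_le_exp_of_nonneg (exp_pos t).le _

theorem bell_le_div_log_pow_of_eight_le {q : ℕ} (hq : 8 ≤ q) :
    (bell q : ℝ) ≤ (q / log (q + 1)) ^ q := by
  set L := log ((q : ℝ) + 1) with hL_def
  have hq' : (8 : ℝ) ≤ q := by exact_mod_cast hq
  have hL : 0 < L := log_pos (by linarith)
  have hpoly : ((q : ℝ) + 1) ^ 3 ≤ (2 / 3 * q) ^ 4 := by
    nlinarith [mul_nonneg (mul_nonneg (sub_nonneg.2 hq') (sub_nonneg.2 hq')) (sub_nonneg.2 hq')]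
  have hexp : exp (3 / 4 * L) ≤ 2 / 3 * q := by
    refine le_of_pow_le_pow_left₀ (n := 4) (by norm_num) (by positivity) ?_
    rwa [← exp_nat_mul,
      show ((4 : ℕ) : ℝ) * (3 / 4 * L) = ((3 : ℕ) : ℝ) * L by push_cast; ring,
      exp_nat_mul, hL_def, exp_log (by positivity)]
  have hlog : 2 / 3 ≤ log (3 / 4 * exp 1) := by
    have h := one_sub_inv_le_log_of_pos (show (0 : ℝ) < 3 / 4 by norm_num)
    rw [log_mul (by norm_num) (exp_ne_zero 1), log_exp]
    norm_num at h ⊢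
    linarith
  have hexpexp : exp (exp (3 / 4 * L)) ≤ (3 / 4 * exp 1) ^ q := by
    rw [← exp_log (by positivity : (0 : ℝ) < 3 / 4 * exp 1), ← exp_nat_mul]
    gcongr
    nlinarith
  calc (bell q : ℝ) ≤ (q / (exp 1 * (3 / 4 * L))) ^ q * exp (exp (3 / 4 * L)) :=
        bell_le_mul_exp_exp q (by positivity)
    _ ≤ (q / (exp 1 * (3 / 4 * L))) ^ q * (3 / 4 * exp 1) ^ q := by gcongr
    _ = (q / L) ^ q := by
        rw [← mul_pow]
        congr 1
        field_simp

theorem log_le_mul_div_exp_one {x y : ℝ} (k : ℕ) (hx : 0 < x) (hy : 0 < y) (hxy : x ≤ y ^ k) :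
    log x ≤ k * y / exp 1 := by
  have hy' : log y ≤ y / exp 1 := by
    have h := log_le_sub_one_of_pos (div_pos hy (exp_pos 1))
    rw [log_div hy.ne' (exp_ne_zero 1), log_exp] at h
    linarith
  calc log x ≤ log (y ^ k) := log_le_log hx hxy
    _ = k * log y := by rw [Real.log_pow]
    _ ≤ k * (y / exp 1) := by gcongr
    _ = k * y / exp 1 := (mul_div_assoc _ _ _).symm

theorem bell_le_div_log_pow_of_mul_pow_le {q k : ℕ} {y : ℝ} (hq : 0 < q) (hy : 0 < y)
    (hqy : (q : ℝ) + 1 ≤ y ^ k) (h : (bell q : ℝ) * (k * y) ^ q ≤ (2.7182818283 * q) ^ q) :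
    (bell q : ℝ) ≤ (q / log (q + 1)) ^ q := by
  have hL : 0 < log ((q : ℝ) + 1) := log_pos (by norm_cast; omega)
  have hlog := log_le_mul_div_exp_one k (by positivity) hy hqy
  have hky : 0 < (k : ℝ) * y := (div_pos_iff_of_pos_right (exp_pos 1)).mp (hL.trans_le hlog)
  calc (bell q : ℝ) ≤ (exp 1 * q / (k * y)) ^ q := by
        rw [div_pow, le_div_iff₀ (by positivity)]
        refine h.trans (pow_le_pow_left₀ (by positivity) ?_ q)
        gcongr
        exact exp_one_gt_d9.le
    _ = (q / (k * y / exp 1)) ^ q := by rw [div_div_eq_mul_div, mul_comm]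
    _ ≤ (q / log (q + 1)) ^ q := by gcongr

theorem stmt_10_general (q : ℕ) :
    (bell q : ℝ) ≤ ((q : ℝ) / Real.log (q + 1)) ^ q := by
  rcases lt_or_ge q 8 with hq | hq
  · interval_cases q
    · simp [bell, stirling2]
    · exact bell_le_div_log_pow_of_mul_pow_le (k := 1) (y := 2) (by norm_num) (by norm_num)
        (by norm_num) (by norm_num [show bell 1 = 1 from rfl])
    · exact bell_le_div_log_pow_of_mul_pow_le (k := 1) (y := 3) (by norm_num) (by norm_num)
        (by norm_num) (by norm_num [show bell 2 = 2 from rfl])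
    · exact bell_le_div_log_pow_of_mul_pow_le (k := 1) (y := 4) (by norm_num) (by norm_num)
        (by norm_num) (by norm_num [show bell 3 = 5 from rfl])
    · exact bell_le_div_log_pow_of_mul_pow_le (k := 1) (y := 5) (by norm_num) (by norm_num)
        (by norm_num) (by norm_num [show bell 4 = 15 from rfl])
    · exact bell_le_div_log_pow_of_mul_pow_le (k := 1) (y := 6) (by norm_num) (by norm_num)
        (by norm_num) (by norm_num [show bell 5 = 52 from rfl])
    · exact bell_le_div_log_pow_of_mul_pow_le (k := 3) (y := 2) (by norm_num) (by norm_num)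
        (by norm_num) (by norm_num [show bell 6 = 203 from rfl])
    · exact bell_le_div_log_pow_of_mul_pow_le (k := 3) (y := 2) (by norm_num) (by norm_num)
        (by norm_num) (by norm_num [show bell 7 = 877 from rfl])
  · exact bell_le_div_log_pow_of_eight_le hq

theorem stmt_10 (q : ℕ) (hq : 1 ≤ q) :
    (bell q : ℝ) ≤ ((q : ℝ) / Real.log (q + 1)) ^ q :=
  stmt_10_general q
end
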